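/- For the path graph P_n with an added edge of weight Δ ≥ 0 between vertices i₀ < j₀, the RP-1 distance is d_{rp(1)}(P_n, P_n + Δ_{i₀j₀}) = |Δ|(j₀ − i₀)[2n(1 + (j₀−i₀)(2j₀ + 4i₀ − 3)) − 3(j₀ − i₀)(i₀ + j₀ − 1)²] / (6(Δ(j₀ − i₀) + 1)). -/
import Mathlib


open Matrix Finset

/-- `A` is a (weighted) adjacency matrix: symmetric, nonnegative, no self-loops. -/
def IsAdjMat {n : ℕ} (A : Matrix (Fin n) (Fin n) ℝ) : Prop :=
  A.IsSymm ∧ (∀ i j, 0 ≤ A i j) ∧ ∀ i, A i i = 0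

/-- Combinatorial Laplacian `L = D - A`. -/
def lap {n : ℕ} (A : Matrix (Fin n) (Fin n) ℝ) : Matrix (Fin n) (Fin n) ℝ :=
  Matrix.diagonal (fun i => ∑ j, A i j) - A

/-- Connectivity: the kernel of the Laplacian is spanned by the all-ones vector. -/
def IsConnectedLap {n : ℕ} (L : Matrix (Fin n) (Fin n) ℝ) : Prop :=
  ∀ v : Fin n → ℝ, L.mulVec v = 0 → ∃ c : ℝ, v = fun _ => c

/-- `Ld` is the Moore–Penrose pseudoinverse of `L`. -/
def IsMoorePenrose {n : ℕ} (L Ld : Matrix (Fin n) (Fin n) ℝ) : Prop :=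
  L * Ld * L = L ∧ Ld * L * Ld = Ld ∧ (L * Ld)ᵀ = L * Ld ∧ (Ld * L)ᵀ = Ld * L

/-- Effective resistance `R_ij = L†_ii + L†_jj - 2 L†_ij`. -/
def effR {n : ℕ} (Ld : Matrix (Fin n) (Fin n) ℝ) (i j : Fin n) : ℝ :=
  Ld i i + Ld j j - 2 * Ld i j

/-- Adjacency matrix of the unweighted complete graph `K_n`. -/
def completeAdj (n : ℕ) : Matrix (Fin n) (Fin n) ℝ :=
  Matrix.of fun i j => if i = j then 0 else 1

/-- Symmetric single-edge perturbation matrix: adds `Δ` to the weight of edge `[i₀, j₀]`. -/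
def edgePert {n : ℕ} (i₀ j₀ : Fin n) (Δ : ℝ) : Matrix (Fin n) (Fin n) ℝ :=
  Matrix.of fun i j => if (i = i₀ ∧ j = j₀) ∨ (i = j₀ ∧ j = i₀) then Δ else 0

/-- Adjacency matrix of the unweighted star graph `S_n` with hub the vertex of index 0. -/
def starAdj (n : ℕ) : Matrix (Fin n) (Fin n) ℝ :=
  Matrix.of fun i j => if i ≠ j ∧ (i.val = 0 ∨ j.val = 0) then 1 else 0

/-- Adjacency matrix of the unweighted path graph `P_n` on vertices `0, …, n-1`. -/
def pathAdj (n : ℕ) : Matrix (Fin n) (Fin n) ℝ :=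
  Matrix.of fun i j => if i.val + 1 = j.val ∨ j.val + 1 = i.val then 1 else 0

/-- Adjacency matrix of the unweighted cycle graph `C_n`. -/
def cycleAdj (n : ℕ) : Matrix (Fin n) (Fin n) ℝ :=
  Matrix.of fun i j => if (i.val + 1) % n = j.val ∨ (j.val + 1) % n = i.val then 1 else 0

-- auxiliary lemmas continuing after the given defs
section Aux
open Matrix Finset

variable {n : ℕ}

lemma mp_unique {A X Y : Matrix (Fin n) (Fin n) ℝ}
    (hX : IsMoorePenrose A X) (hY : IsMoorePenrose A Y) : X = Y := by
  obtain ⟨hx1, hx2, hx3, hx4⟩ := hX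
  obtain ⟨hy1, hy2, hy3, hy4⟩ := hY
  have hXA : X * A = Y * A := by
    calc X * A = (X * A)ᵀ := hx4.symm
    _ = Aᵀ * Xᵀ := by rw [transpose_mul]
    _ = (A * Y * A)ᵀ * Xᵀ := by rw [hy1]
    _ = (Y * A)ᵀ * (X * A)ᵀ := by simp [transpose_mul, Matrix.mul_assoc]
    _ = (Y * A) * (X * A) := by rw [hx4, hy4]
    _ = Y * (A * X * A) := by simp [Matrix.mul_assoc]
    _ = Y * A := by rw [hx1]
  have hAX : A * X = A * Y := by
    calc A * X = (A * X)ᵀ := hx3.symm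
    _ = Xᵀ * Aᵀ := by rw [transpose_mul]
    _ = Xᵀ * (A * Y * A)ᵀ := by rw [hy1]
    _ = (A * X)ᵀ * (A * Y)ᵀ := by simp [transpose_mul, Matrix.mul_assoc]
    _ = (A * X) * (A * Y) := by rw [hx3, hy3]
    _ = (A * X * A) * Y := by simp [Matrix.mul_assoc]
    _ = A * Y := by rw [hx1]
  calc X = X * A * X := hx2.symm
  _ = Y * A * X := by rw [hXA]
  _ = Y * (A * Y) := by rw [Matrix.mul_assoc, hAX]
  _ = Y := by rw [← Matrix.mul_assoc, hy2]

lemma mp_symm {L Ld : Matrix (Fin n) (Fin n) ℝ} (hL : Lᵀ = L)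
    (h : IsMoorePenrose L Ld) : Ldᵀ = Ld := by
  have h' : IsMoorePenrose L Ldᵀ := by
    obtain ⟨h1, h2, h3, h4⟩ := h
    refine ⟨?_, ?_, ?_, ?_⟩
    · calc L * Ldᵀ * L = (Lᵀ * Ld * Lᵀ)ᵀ := by simp [transpose_mul, Matrix.mul_assoc]
      _ = L := by rw [hL, h1, hL]
    · calc Ldᵀ * L * Ldᵀ = (Ld * Lᵀ * Ld)ᵀ := by simp [transpose_mul, Matrix.mul_assoc]
      _ = Ldᵀ := by rw [hL, h2]
    · calc (L * Ldᵀ)ᵀ = Ld * Lᵀ := by simp [transpose_mul]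
      _ = Ld * L := by rw [hL]
      _ = (Ld * L)ᵀ := h4.symm
      _ = Lᵀ * Ldᵀ := by rw [transpose_mul]
      _ = L * Ldᵀ := by rw [hL]
    · calc (Ldᵀ * L)ᵀ = Lᵀ * Ld := by simp [transpose_mul]
      _ = L * Ld := by rw [hL]
      _ = (L * Ld)ᵀ := h3.symm
      _ = Ldᵀ * Lᵀ := by rw [transpose_mul]
      _ = Ldᵀ * L := by rw [hL]
  exact (mp_unique h' h)

lemma lap_quadratic (A : Matrix (Fin n) (Fin n) ℝ) (hA : ∀ i j, A j i = A i j)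
    (v : Fin n → ℝ) :
    2 * (v ⬝ᵥ (lap A).mulVec v) = ∑ i, ∑ j, A i j * (v i - v j)^2 := by
  have key : ∑ i, ∑ j, A i j * (v j)^2 = ∑ i, ∑ j, A i j * (v i)^2 := by
    rw [Finset.sum_comm]
    exact Finset.sum_congr rfl fun i _ => Finset.sum_congr rfl fun j _ => by rw [hA]
  have expand : v ⬝ᵥ (lap A).mulVec v
      = (∑ i, ∑ j, A i j * (v i)^2) - ∑ i, ∑ j, A i j * (v i * v j) := by
    have h1 : (lap A).mulVec v = fun x => (∑ j, A x j) * v x - ∑ j, A x j * v j := by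
      funext x
      rw [lap, sub_mulVec]
      simp [Pi.sub_apply, mulVec, dotProduct, Matrix.diagonal_apply, ite_mul, zero_mul,
        Finset.sum_ite_eq]
    rw [h1]
    simp only [dotProduct, mul_sub]
    rw [Finset.sum_sub_distrib]
    congr 1
    · exact Finset.sum_congr rfl fun i _ => by
        rw [Finset.sum_mul, Finset.mul_sum]
        exact Finset.sum_congr rfl fun j _ => by ring
    · exact Finset.sum_congr rfl fun i _ => by
        rw [Finset.mul_sum]
        exact Finset.sum_congr rfl fun j _ => by ring
  have rh : ∑ i, ∑ j, A i j * (v i - v j)^2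
      = (∑ i, ∑ j, A i j * (v i)^2) + (∑ i, ∑ j, A i j * (v j)^2)
        - 2 * ∑ i, ∑ j, A i j * (v i * v j) := by
    rw [Finset.mul_sum, ← Finset.sum_add_distrib, ← Finset.sum_sub_distrib]
    refine Finset.sum_congr rfl fun i _ => ?_
    rw [Finset.mul_sum, ← Finset.sum_add_distrib, ← Finset.sum_sub_distrib]
    exact Finset.sum_congr rfl fun j _ => by ring
  rw [expand, rh, key]; ring

lemma lap_kernel_edge (A : Matrix (Fin n) (Fin n) ℝ) (hA : ∀ i j, A j i = A i j)
    (hpos : ∀ i j, 0 ≤ A i j) (v : Fin n → ℝ) (hv : (lap A).mulVec v = 0) :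
    ∀ i j, 0 < A i j → v i = v j := by
  have h0 : ∑ i, ∑ j, A i j * (v i - v j)^2 = 0 := by
    rw [← lap_quadratic A hA v, hv]; simp
  intro i j hij
  have hterm : ∀ i ∈ Finset.univ, ∀ j ∈ (Finset.univ : Finset (Fin n)),
      (0:ℝ) ≤ A i j * (v i - v j)^2 :=
    fun i _ j _ => mul_nonneg (hpos i j) (sq_nonneg _)
  have h1 : ∀ i ∈ (Finset.univ : Finset (Fin n)), ∑ j, A i j * (v i - v j)^2 = 0 :=
    (Finset.sum_eq_zero_iff_of_nonneg (fun i _ => Finset.sum_nonneg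
      (fun j _ => hterm i (Finset.mem_univ i) j (Finset.mem_univ j)))).mp h0
  have h2 := (Finset.sum_eq_zero_iff_of_nonneg (fun j _ => hterm i (Finset.mem_univ i) j
    (Finset.mem_univ j))).mp (h1 i (Finset.mem_univ i)) j (Finset.mem_univ j)
  rcases mul_eq_zero.mp h2 with h | h
  · exact absurd h hij.ne'
  · have := sq_eq_zero_iff.mp h; linarith

lemma ker_const (A : Matrix (Fin n) (Fin n) ℝ) (hA : ∀ i j, A j i = A i j)
    (hpos : ∀ i j, 0 ≤ A i j)
    (hedge : ∀ (m : ℕ) (h : m + 1 < n), 0 < A ⟨m, by omega⟩ ⟨m + 1, h⟩) :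
    ∀ v : Fin n → ℝ, (lap A).mulVec v = 0 → ∀ a b : Fin n, v a = v b := by
  intro v hv a b
  have key := lap_kernel_edge A hA hpos v hv
  have hn0 : 0 < n := a.pos
  have all : ∀ (m : ℕ) (h : m < n), v ⟨m, h⟩ = v ⟨0, hn0⟩ := by
    intro m
    induction m with
    | zero => intro h; rfl
    | succ m ih =>
      intro h
      have step := key ⟨m, by omega⟩ ⟨m + 1, h⟩ (hedge m h)
      rw [← step]; exact ih (by omega)
  have ha := all a.val a.isLt
  have hb := all b.val b.isLt
  simp only [Fin.eta] at ha hb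
  rw [ha, hb]

lemma sum_if_val_eq (m : ℕ) (f : Fin n → ℝ) :
    ∑ j : Fin n, (if j.val = m then f j else 0) = if h : m < n then f ⟨m, h⟩ else 0 := by
  split_ifs with h
  · have hc : ∀ j : Fin n, (j.val = m) ↔ (j = ⟨m, h⟩) := fun j => by
      constructor
      · intro hj; exact Fin.ext hj
      · intro hj; rw [hj]
    simp only [hc]
    rw [Finset.sum_ite_eq' Finset.univ (⟨m, h⟩ : Fin n) f]
    simp
  · apply Finset.sum_eq_zero; intro j _
    rw [if_neg]; exact fun hc => h (hc ▸ j.isLt)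

lemma path_row_sum (k : Fin n) (w : Fin n → ℝ) :
    ∑ j : Fin n, pathAdj n k j * w j
      = (if h : k.val + 1 < n then w ⟨k.val + 1, h⟩ else 0)
        + (if h : 0 < k.val then w ⟨k.val - 1, by omega⟩ else 0) := by
  have split : ∀ j : Fin n, pathAdj n k j * w j
      = (if j.val = k.val + 1 then w j else 0)
        + (if j.val = k.val - 1 ∧ 0 < k.val then w j else 0) := by
    intro j
    simp only [pathAdj, Matrix.of_apply]
    split_ifs with h1 h2 h3 <;> try (exfalso; omega)
    all_goals ring
  rw [Finset.sum_congr rfl (fun j _ => split j), Finset.sum_add_distrib]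
  congr 1
  · exact sum_if_val_eq (k.val + 1) w
  · by_cases h0 : 0 < k.val
    · have hc : ∀ j : Fin n, (j.val = k.val - 1 ∧ 0 < k.val) ↔ (j.val = k.val - 1) := by
        intro j; constructor
        · exact fun h => h.1
        · exact fun h => ⟨h, h0⟩
      simp only [hc]
      rw [sum_if_val_eq (k.val - 1) w]
      rw [dif_pos (by omega : k.val - 1 < n), dif_pos h0]
    · rw [dif_neg h0]
      apply Finset.sum_eq_zero; intro j _
      rw [if_neg]; exact fun hc => h0 hc.2

lemma path_lap_mulVec (k : Fin n) (w : Fin n → ℝ) :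
    (lap (pathAdj n)).mulVec w k
      = (if h : k.val + 1 < n then w k - w ⟨k.val + 1, h⟩ else 0)
        + (if h : 0 < k.val then w k - w ⟨k.val - 1, by omega⟩ else 0) := by
  have h1 : (lap (pathAdj n)).mulVec w k
      = (∑ j, pathAdj n k j) * w k - ∑ j, pathAdj n k j * w j := by
    rw [lap, sub_mulVec]
    simp [Pi.sub_apply, mulVec, dotProduct, Matrix.diagonal_apply, ite_mul, zero_mul,
      Finset.sum_ite_eq]
  rw [h1]
  have h2 : (∑ j, pathAdj n k j)
      = (if h : k.val + 1 < n then (1:ℝ) else 0) + (if h : 0 < k.val then (1:ℝ) else 0) := by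
    have := path_row_sum k (fun _ => (1:ℝ))
    simpa using this
  rw [h2, path_row_sum k w]
  by_cases ha : k.val + 1 < n <;> by_cases hb : 0 < k.val <;> simp [ha, hb] <;> ring

lemma pert_lap_entry (i₀ j₀ : Fin n) (hne : i₀ ≠ j₀) (Δ : ℝ) (k l : Fin n) :
    lap (edgePert i₀ j₀ Δ) k l
      = Δ * (if k = i₀ then 1 else if k = j₀ then -1 else 0)
          * (if l = i₀ then 1 else if l = j₀ then -1 else 0) := by
  have rowsum : ∀ m : Fin n, (∑ j, edgePert i₀ j₀ Δ m j) = if m = i₀ ∨ m = j₀ then Δ else 0 := by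
    intro m
    by_cases hm1 : m = i₀
    · have hc : ∀ j : Fin n, ((m = i₀ ∧ j = j₀) ∨ (m = j₀ ∧ j = i₀)) ↔ (j = j₀) := by
        intro j; constructor
        · rintro (⟨_, h⟩ | ⟨h, _⟩); exact h; exact absurd (hm1.symm.trans h) hne
        · exact fun h => Or.inl ⟨hm1, h⟩
      simp only [edgePert, Matrix.of_apply, hc]
      rw [if_pos (Or.inl hm1)]
      simp [Finset.sum_ite_eq']
    · by_cases hm2 : m = j₀
      · have hc : ∀ j : Fin n, ((m = i₀ ∧ j = j₀) ∨ (m = j₀ ∧ j = i₀)) ↔ (j = i₀) := by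
          intro j; constructor
          · rintro (⟨h, _⟩ | ⟨_, h⟩); exact absurd h hm1; exact h
          · exact fun h => Or.inr ⟨hm2, h⟩
        simp only [edgePert, Matrix.of_apply, hc]
        rw [if_pos (Or.inr hm2)]
        simp [Finset.sum_ite_eq']
      · simp only [edgePert, Matrix.of_apply, hm1, hm2,
          if_neg (by tauto : ¬(m = i₀ ∨ m = j₀))]
        apply Finset.sum_eq_zero; intro j _
        rw [if_neg]; tauto
  have hle : lap (edgePert i₀ j₀ Δ) k l
      = (if k = l then (if k = i₀ ∨ k = j₀ then Δ else 0) else 0) - edgePert i₀ j₀ Δ k l := by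
    simp [lap, Matrix.sub_apply, Matrix.diagonal_apply, rowsum]
  rw [hle]
  simp only [edgePert, Matrix.of_apply]
  by_cases hk1 : k = i₀ <;> by_cases hk2 : k = j₀ <;> by_cases hl1 : l = i₀ <;>
    by_cases hl2 : l = j₀ <;> by_cases hkl : k = l <;>
    simp_all <;> ring

lemma pert_lap_mulVec (i₀ j₀ : Fin n) (hne : i₀ ≠ j₀) (Δ : ℝ) (w : Fin n → ℝ) (k : Fin n) :
    (lap (edgePert i₀ j₀ Δ)).mulVec w k
      = Δ * (if k = i₀ then 1 else if k = j₀ then -1 else 0) * (w i₀ - w j₀) := by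
  have hq : ∑ l, (if l = i₀ then (1:ℝ) else if l = j₀ then -1 else 0) * w l = w i₀ - w j₀ := by
    have split : ∀ l : Fin n, (if l = i₀ then (1:ℝ) else if l = j₀ then -1 else 0) * w l
        = (if l = i₀ then w l else 0) + (if l = j₀ then -(w l) else 0) := by
      intro l
      by_cases h1 : l = i₀ <;> by_cases h2 : l = j₀ <;> simp_all <;> ring
    rw [Finset.sum_congr rfl (fun l _ => split l), Finset.sum_add_distrib]
    rw [Finset.sum_ite_eq' Finset.univ i₀ w, Finset.sum_ite_eq' Finset.univ j₀ (fun l => -(w l))]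
    simp; ring
  simp only [mulVec, dotProduct]
  rw [Finset.sum_congr rfl (fun l _ => by rw [pert_lap_entry i₀ j₀ hne Δ k l])]
  rw [show ∀ (a : Fin n → ℝ),
      (∑ l, Δ * (if k = i₀ then (1:ℝ) else if k = j₀ then -1 else 0)
        * (if l = i₀ then (1:ℝ) else if l = j₀ then -1 else 0) * a l)
      = Δ * (if k = i₀ then (1:ℝ) else if k = j₀ then -1 else 0)
        * ∑ l, (if l = i₀ then (1:ℝ) else if l = j₀ then -1 else 0) * a l from
    fun a => by rw [Finset.mul_sum]; exact Finset.sum_congr rfl fun l _ => by ring]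
  rw [hq]

end Aux
section Aux2
open Matrix Finset

variable {n : ℕ}

/-- real-valued clamp potential -/
noncomputable def clv (a b m : ℕ) : ℝ := -((min (max m a) b : ℕ) : ℝ)

lemma bdot (i j : Fin n) (u : Fin n → ℝ) :
    ∑ x : Fin n, ((if x = i then (1:ℝ) else 0) - (if x = j then 1 else 0)) * u x
      = u i - u j := by
  have h : ∀ x : Fin n, ((if x = i then (1:ℝ) else 0) - (if x = j then 1 else 0)) * u x
      = (if x = i then u x else 0) - (if x = j then u x else 0) := by
    intro x; split_ifs <;> ring
  rw [Finset.sum_congr rfl (fun x _ => h x), Finset.sum_sub_distrib,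
    Finset.sum_ite_eq' Finset.univ i u, Finset.sum_ite_eq' Finset.univ j u]
  simp

lemma effR_eq {L Ld : Matrix (Fin n) (Fin n) ℝ} (hL : Lᵀ = L)
    (hMP : IsMoorePenrose L Ld)
    (hker : ∀ k : Fin n → ℝ, L.mulVec k = 0 → ∀ a b : Fin n, k a = k b)
    (i j : Fin n) (w : Fin n → ℝ)
    (hw : L.mulVec w = fun x => (if x = i then 1 else 0) - (if x = j then 1 else 0)) :
    effR Ld i j = w i - w j := by
  have hsym := mp_symm hL hMP
  set b : Fin n → ℝ := fun x => (if x = i then 1 else 0) - (if x = j then 1 else 0) with hb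
  set u : Fin n → ℝ := (Ld * L).mulVec w with hu
  have hker' : L.mulVec (w - u) = 0 := by
    have e : L.mulVec u = L.mulVec w := by
      rw [hu, Matrix.mulVec_mulVec, ← Matrix.mul_assoc, hMP.1]
    rw [Matrix.mulVec_sub, e, sub_self]
  have hk := hker _ hker' i j
  have hmv : Ld.mulVec b = u := by
    rw [← hw, hu, Matrix.mulVec_mulVec]
  have h2 : ∀ x, Ld.mulVec b x = Ld x i - Ld x j := by
    intro x
    show ∑ y, Ld x y * b y = _
    rw [Finset.sum_congr rfl (fun y _ => mul_comm (Ld x y) (b y))]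
    exact bdot i j (fun y => Ld x y)
  have hsym' : Ld j i = Ld i j := by
    have := congrFun (congrFun hsym i) j
    rw [Matrix.transpose_apply] at this
    exact this
  have e1 : effR Ld i j = (Ld.mulVec b) i - (Ld.mulVec b) j := by
    rw [h2 i, h2 j, effR]; linarith
  have e2 : (Ld.mulVec b) i - (Ld.mulVec b) j = u i - u j := by rw [hmv]
  have hk' : w i - u i = w j - u j := hk
  rw [e1, e2]; linarith

lemma effR_symm {Ld : Matrix (Fin n) (Fin n) ℝ} (hsym : Ldᵀ = Ld) (u v : Fin n) :
    effR Ld u v = effR Ld v u := by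
  have h := congrFun (congrFun hsym u) v
  rw [Matrix.transpose_apply] at h
  rw [effR, effR, h]; ring

lemma effR_self (Ld : Matrix (Fin n) (Fin n) ℝ) (u : Fin n) : effR Ld u u = 0 := by
  rw [effR]; ring

lemma clamp_flow (a b : ℕ) (hab : a < b) (hbn : b < n) (k : Fin n) :
    (if h : k.val + 1 < n
        then -((min (max k.val a) b : ℕ) : ℝ) + ((min (max (k.val + 1) a) b : ℕ) : ℝ)
        else 0)
      + (if h : 0 < k.val
        then -((min (max k.val a) b : ℕ) : ℝ) + ((min (max (k.val - 1) a) b : ℕ) : ℝ)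
        else 0)
      = (if k.val = a then 1 else 0) - (if k.val = b then 1 else 0) := by
  rcases Nat.lt_trichotomy k.val a with hK | hK | hK
  · have c1 : min (max k.val a) b = a := by omega
    have c2 : min (max (k.val + 1) a) b = a := by omega
    have c3 : min (max (k.val - 1) a) b = a := by omega
    split_ifs <;>
      first
        | (exfalso; omega)
        | (simp only [c1, c2, c3]; push_cast; ring)
        | (simp only [c1, c2, c3]; norm_num)
  · have c1 : min (max k.val a) b = a := by omega
    have c2 : min (max (k.val + 1) a) b = a + 1 := by omega
    have c3 : min (max (k.val - 1) a) b = a := by omega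
    have hn : k.val + 1 < n := by omega
    split_ifs <;>
      first
        | (exfalso; omega)
        | (simp only [c1, c2, c3]; push_cast; ring)
        | (simp only [c1, c2, c3]; norm_num)
  · rcases Nat.lt_trichotomy k.val b with hK2 | hK2 | hK2
    · have c1 : min (max k.val a) b = k.val := by omega
      have c2 : min (max (k.val + 1) a) b = k.val + 1 := by omega
      have c3 : min (max (k.val - 1) a) b = k.val - 1 := by omega
      have hn : k.val + 1 < n := by omega
      have h0 : 0 < k.val := by omega
      split_ifs <;>
        first
          | (exfalso; omega)
          | (simp only [c1, c2, c3]; push_cast [Nat.cast_sub (show 1 ≤ k.val by omega)]; ring)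
          | (simp only [c1, c2, c3]; push_cast; ring)
          | (simp only [c1, c2, c3]; norm_num)
    · have c1 : min (max k.val a) b = b := by omega
      have c2 : min (max (k.val + 1) a) b = b := by omega
      have c3 : min (max (k.val - 1) a) b = b - 1 := by omega
      have h0 : 0 < k.val := by omega
      split_ifs <;>
        first
          | (exfalso; omega)
          | (simp only [c1, c2, c3]; push_cast [Nat.cast_sub (show 1 ≤ b by omega)]; ring)
          | (simp only [c1, c2, c3]; push_cast; ring)
          | (simp only [c1, c2, c3]; norm_num)
    · have c1 : min (max k.val a) b = b := by omega
      have c2 : min (max (k.val + 1) a) b = b := by omega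
      have c3 : min (max (k.val - 1) a) b = b := by omega
      split_ifs <;>
        first
          | (exfalso; omega)
          | (simp only [c1, c2, c3]; push_cast; ring)
          | (simp only [c1, c2, c3]; norm_num)

lemma path_lap_mulVec_val (k : Fin n) (f : ℕ → ℝ) :
    (lap (pathAdj n)).mulVec (fun x : Fin n => f x.val) k
      = (if k.val + 1 < n then f k.val - f (k.val + 1) else 0)
        + (if 0 < k.val then f k.val - f (k.val - 1) else 0) := by
  rw [path_lap_mulVec]
  rfl

lemma clamp_flow2 (a b : ℕ) (hab : a < b) (hbn : b < n) (k : Fin n) :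
    (if k.val + 1 < n then clv a b k.val - clv a b (k.val + 1) else 0)
      + (if 0 < k.val then clv a b k.val - clv a b (k.val - 1) else 0)
      = (if k.val = a then 1 else 0) - (if k.val = b then 1 else 0) := by
  have base := clamp_flow a b hab hbn k
  simp only [clv]
  split_ifs at base ⊢ <;> linarith

lemma if_fin_val (k u : Fin n) :
    (if k = u then (1:ℝ) else 0) = (if k.val = u.val then 1 else 0) := by
  by_cases h : k = u
  · rw [if_pos h, if_pos (congrArg Fin.val h)]
  · rw [if_neg h, if_neg (fun hh => h (Fin.ext hh))]

lemma lap_add (A B : Matrix (Fin n) (Fin n) ℝ) : lap (A + B) = lap A + lap B := by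
  ext i j
  simp only [lap, Matrix.add_apply, Matrix.sub_apply, Matrix.diagonal_apply,
    Finset.sum_add_distrib]
  split_ifs <;> ring

lemma lap_transpose {A : Matrix (Fin n) (Fin n) ℝ} (hA : ∀ i j, A j i = A i j) :
    (lap A)ᵀ = lap A := by
  ext i j
  simp only [Matrix.transpose_apply, lap, Matrix.sub_apply, Matrix.diagonal_apply]
  by_cases h : i = j
  · subst h; rfl
  · rw [if_neg (fun hh => h hh.symm), if_neg h, hA i j]

lemma sum_range_cast (m : ℕ) : ∑ k ∈ Finset.range m, (k:ℝ) = m*(m-1)/2 := by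
  induction m with
  | zero => simp
  | succ m ih => rw [Finset.sum_range_succ, ih]; push_cast; ring

lemma sum_range_sq_cast (m : ℕ) : ∑ k ∈ Finset.range m, (k:ℝ)^2 = m*(m-1)*(2*m-1)/6 := by
  induction m with
  | zero => simp
  | succ m ih => rw [Finset.sum_range_succ, ih]; push_cast; ring

lemma clamp_sum (n a b : ℕ) (hab : a < b) (hbn : b < n) :
    ∑ k ∈ Finset.range n, ((min (max k a) b : ℕ) : ℝ)
      = (a:ℝ)^2 + ((b:ℝ)*((b:ℝ)-1) - (a:ℝ)*((a:ℝ)-1))/2 + ((n:ℝ) - (b:ℝ)) * (b:ℝ) := by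
  rw [← Finset.sum_range_add_sum_Ico _ (show b ≤ n by omega),
      ← Finset.sum_range_add_sum_Ico _ (show a ≤ b by omega)]
  have e1 : ∑ k ∈ Finset.range a, ((min (max k a) b : ℕ) : ℝ) = (a:ℝ) * (a:ℝ) := by
    rw [Finset.sum_congr rfl (fun k hk => by
      rw [show min (max k a) b = a by have := Finset.mem_range.mp hk; omega])]
    rw [Finset.sum_const, Finset.card_range, nsmul_eq_mul]
  have e2 : ∑ k ∈ Finset.Ico a b, ((min (max k a) b : ℕ) : ℝ)
      = (b:ℝ)*((b:ℝ)-1)/2 - (a:ℝ)*((a:ℝ)-1)/2 := by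
    rw [Finset.sum_congr rfl (fun k hk => by
      have := Finset.mem_Ico.mp hk
      rw [show min (max k a) b = k by omega])]
    rw [Finset.sum_Ico_eq_sub _ (show a ≤ b by omega), sum_range_cast, sum_range_cast]
  have e3 : ∑ k ∈ Finset.Ico b n, ((min (max k a) b : ℕ) : ℝ) = ((n:ℝ) - (b:ℝ)) * (b:ℝ) := by
    rw [Finset.sum_congr rfl (fun k hk => by
      have := Finset.mem_Ico.mp hk
      rw [show min (max k a) b = b by omega])]
    rw [Finset.sum_const, Nat.card_Ico, nsmul_eq_mul, Nat.cast_sub (by omega)]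
  rw [e1, e2, e3]; ring

lemma clamp_sq_sum (n a b : ℕ) (hab : a < b) (hbn : b < n) :
    ∑ k ∈ Finset.range n, ((min (max k a) b : ℕ) : ℝ)^2
      = (a:ℝ)^3 + ((b:ℝ)*((b:ℝ)-1)*(2*(b:ℝ)-1) - (a:ℝ)*((a:ℝ)-1)*(2*(a:ℝ)-1))/6
        + ((n:ℝ) - (b:ℝ)) * (b:ℝ)^2 := by
  rw [← Finset.sum_range_add_sum_Ico _ (show b ≤ n by omega),
      ← Finset.sum_range_add_sum_Ico _ (show a ≤ b by omega)]
  have e1 : ∑ k ∈ Finset.range a, ((min (max k a) b : ℕ) : ℝ)^2 = (a:ℝ) * (a:ℝ)^2 := by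
    rw [Finset.sum_congr rfl (fun k hk => by
      rw [show min (max k a) b = a by have := Finset.mem_range.mp hk; omega])]
    rw [Finset.sum_const, Finset.card_range, nsmul_eq_mul]
  have e2 : ∑ k ∈ Finset.Ico a b, ((min (max k a) b : ℕ) : ℝ)^2
      = (b:ℝ)*((b:ℝ)-1)*(2*(b:ℝ)-1)/6 - (a:ℝ)*((a:ℝ)-1)*(2*(a:ℝ)-1)/6 := by
    rw [Finset.sum_congr rfl (fun k hk => by
      have := Finset.mem_Ico.mp hk
      rw [show min (max k a) b = k by omega])]
    rw [Finset.sum_Ico_eq_sub _ (show a ≤ b by omega), sum_range_sq_cast, sum_range_sq_cast]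
  have e3 : ∑ k ∈ Finset.Ico b n, ((min (max k a) b : ℕ) : ℝ)^2 = ((n:ℝ) - (b:ℝ)) * (b:ℝ)^2 := by
    rw [Finset.sum_congr rfl (fun k hk => by
      have := Finset.mem_Ico.mp hk
      rw [show min (max k a) b = b by omega])]
    rw [Finset.sum_const, Nat.card_Ico, nsmul_eq_mul, Nat.cast_sub (by omega)]
  rw [e1, e2, e3]; ring

lemma sq_diff_sum (t : Fin n → ℝ) :
    ∑ u : Fin n, ∑ v : Fin n, (t v - t u)^2
      = 2*(n:ℝ)*(∑ u, (t u)^2) - 2*(∑ u, t u)^2 := by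
  have inner : ∀ u : Fin n, ∑ v : Fin n, (t v - t u)^2
      = (∑ v, (t v)^2) - 2 * t u * (∑ v, t v) + (n:ℝ) * (t u)^2 := by
    intro u
    have h : ∀ v : Fin n, (t v - t u)^2 = (t v)^2 - 2 * t u * t v + (t u)^2 := fun v => by ring
    rw [Finset.sum_congr rfl (fun v _ => h v), Finset.sum_add_distrib,
      Finset.sum_sub_distrib, ← Finset.mul_sum, Finset.sum_const, Finset.card_univ,
      Fintype.card_fin, nsmul_eq_mul]
  rw [Finset.sum_congr rfl (fun u _ => inner u), Finset.sum_add_distrib, Finset.sum_sub_distrib,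
    Finset.sum_const, Finset.card_univ, Fintype.card_fin, nsmul_eq_mul, ← Finset.sum_mul,
    ← Finset.mul_sum]
  rw [← Finset.mul_sum]
  ring

end Aux2
section Aux3
open Matrix Finset

variable {n : ℕ}

lemma pathAdj_symm_entries : ∀ i j : Fin n, pathAdj n j i = pathAdj n i j := by
  intro i j; simp only [pathAdj, Matrix.of_apply]; rw [if_congr or_comm rfl rfl]

lemma pathAdj_nonneg : ∀ i j : Fin n, 0 ≤ pathAdj n i j := by
  intro i j; simp only [pathAdj, Matrix.of_apply]; split_ifs <;> norm_num

lemma pathAdj_edge_pos : ∀ (m : ℕ) (h : m + 1 < n),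
    0 < pathAdj n ⟨m, by omega⟩ ⟨m + 1, h⟩ := by
  intro m h
  simp [pathAdj]

lemma pert_symm_entries (i₀ j₀ : Fin n) (Δ : ℝ) :
    ∀ i j : Fin n, edgePert i₀ j₀ Δ j i = edgePert i₀ j₀ Δ i j := by
  intro i j; simp only [edgePert, Matrix.of_apply]
  split_ifs with h1 h2 <;> first | rfl | tauto

lemma pert_nonneg (i₀ j₀ : Fin n) {Δ : ℝ} (hΔ : 0 ≤ Δ) :
    ∀ i j : Fin n, 0 ≤ edgePert i₀ j₀ Δ i j := by
  intro i j; simp only [edgePert, Matrix.of_apply]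
  split_ifs
  · exact hΔ
  · exact le_refl 0

lemma A2_symm_entries (i₀ j₀ : Fin n) (Δ : ℝ) :
    ∀ i j : Fin n, (pathAdj n + edgePert i₀ j₀ Δ) j i = (pathAdj n + edgePert i₀ j₀ Δ) i j := by
  intro i j
  simp only [Matrix.add_apply, pathAdj_symm_entries i j, pert_symm_entries i₀ j₀ Δ i j]

lemma key_pair (i₀ j₀ : Fin n) (hlt : i₀.val < j₀.val) (Δ : ℝ) (hΔ : 0 ≤ Δ)
    (Ld₁ Ld₂ : Matrix (Fin n) (Fin n) ℝ)
    (hMP₁ : IsMoorePenrose (lap (pathAdj n)) Ld₁)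
    (hMP₂ : IsMoorePenrose (lap (pathAdj n + edgePert i₀ j₀ Δ)) Ld₂)
    (u v : Fin n) (huv : u.val < v.val) :
    effR Ld₁ u v - effR Ld₂ u v
      = Δ * (((min (max v.val i₀.val) j₀.val : ℕ) : ℝ)
              - ((min (max u.val i₀.val) j₀.val : ℕ) : ℝ))^2
        / (1 + Δ * ((j₀.val : ℝ) - (i₀.val : ℝ))) := by
  have hne : i₀ ≠ j₀ := fun h => by rw [h] at hlt; exact lt_irrefl _ hlt
  have hA2_nonneg : ∀ i j : Fin n, 0 ≤ (pathAdj n + edgePert i₀ j₀ Δ) i j := by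
    intro i j
    simp only [Matrix.add_apply]
    exact add_nonneg (pathAdj_nonneg i j) (pert_nonneg i₀ j₀ hΔ i j)
  have hA2_edge : ∀ (m : ℕ) (h : m + 1 < n),
      0 < (pathAdj n + edgePert i₀ j₀ Δ) ⟨m, by omega⟩ ⟨m + 1, h⟩ := by
    intro m h
    simp only [Matrix.add_apply]
    have h1 := pathAdj_edge_pos m h
    have h2 := pert_nonneg i₀ j₀ hΔ (⟨m, by omega⟩ : Fin n) ⟨m + 1, h⟩
    linarith
  have hker1 := ker_const (pathAdj n) pathAdj_symm_entries pathAdj_nonneg pathAdj_edge_pos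
  have hker2 := ker_const (pathAdj n + edgePert i₀ j₀ Δ) (A2_symm_entries i₀ j₀ Δ)
    hA2_nonneg hA2_edge
  have hL1T : (lap (pathAdj n))ᵀ = lap (pathAdj n) := lap_transpose pathAdj_symm_entries
  have hL2T : (lap (pathAdj n + edgePert i₀ j₀ Δ))ᵀ = lap (pathAdj n + edgePert i₀ j₀ Δ) :=
    lap_transpose (A2_symm_entries i₀ j₀ Δ)
  -- effR for the path graph
  have hp : (lap (pathAdj n)).mulVec (fun x : Fin n => clv u.val v.val x.val)
      = fun x => (if x = u then (1:ℝ) else 0) - (if x = v then 1 else 0) := by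
    funext k
    rw [path_lap_mulVec_val k (clv u.val v.val), if_fin_val k u, if_fin_val k v]
    exact clamp_flow2 u.val v.val huv v.isLt k
  have e1 : effR Ld₁ u v = clv u.val v.val u.val - clv u.val v.val v.val :=
    effR_eq hL1T hMP₁ hker1 u v _ hp
  -- scalars
  set s : ℝ := ((min (max v.val i₀.val) j₀.val : ℕ) : ℝ)
      - ((min (max u.val i₀.val) j₀.val : ℕ) : ℝ) with hs
  set d : ℝ := (j₀.val : ℝ) - (i₀.val : ℝ) with hd
  have hdnn : (0:ℝ) ≤ d := by
    rw [hd]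
    have : (i₀.val : ℝ) ≤ (j₀.val : ℝ) := by exact_mod_cast hlt.le
    linarith
  have hd0 : 0 < 1 + Δ * d := by nlinarith [mul_nonneg hΔ hdnn]
  set c : ℝ := Δ * s / (1 + Δ * d) with hc
  set Wf : ℕ → ℝ := fun m => clv u.val v.val m - c * clv i₀.val j₀.val m with hWf
  -- values of clv
  have hgi : clv i₀.val j₀.val i₀.val = -((i₀.val : ℕ) : ℝ) := by
    simp only [clv]; rw [show min (max i₀.val i₀.val) j₀.val = i₀.val by omega]
  have hgj : clv i₀.val j₀.val j₀.val = -((j₀.val : ℕ) : ℝ) := by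
    simp only [clv]; rw [show min (max j₀.val i₀.val) j₀.val = j₀.val by omega]
  have hpij : clv u.val v.val i₀.val - clv u.val v.val j₀.val = s := by
    simp only [clv, hs]
    have hnat : min (max j₀.val u.val) v.val + min (max u.val i₀.val) j₀.val
        = min (max i₀.val u.val) v.val + min (max v.val i₀.val) j₀.val := by omega
    have hcast : ((min (max j₀.val u.val) v.val + min (max u.val i₀.val) j₀.val : ℕ) : ℝ)
        = ((min (max i₀.val u.val) v.val + min (max v.val i₀.val) j₀.val : ℕ) : ℝ) := by
      rw [hnat]
    rw [Nat.cast_add, Nat.cast_add] at hcast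
    linarith
  have hWijval : Wf i₀.val - Wf j₀.val = s - c * d := by
    simp only [hWf]
    rw [hgi, hgj, hd]
    linear_combination hpij
  have hWijc : Δ * (Wf i₀.val - Wf j₀.val) = c := by
    have h1 : (1 + Δ * d) ≠ 0 := hd0.ne'
    have hc1 : c * (1 + Δ * d) = Δ * s := by rw [hc]; exact div_mul_cancel₀ _ h1
    rw [hWijval]
    linear_combination (-1 : ℝ) * hc1
  -- effR for the perturbed graph
  have hW : (lap (pathAdj n + edgePert i₀ j₀ Δ)).mulVec (fun x : Fin n => Wf x.val)
      = fun x => (if x = u then (1:ℝ) else 0) - (if x = v then 1 else 0) := by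
    funext k
    rw [lap_add, Matrix.add_mulVec, Pi.add_apply,
      path_lap_mulVec_val k Wf,
      pert_lap_mulVec i₀ j₀ hne Δ (fun x : Fin n => Wf x.val) k]
    beta_reduce
    rw [show Δ * (if k = i₀ then (1:ℝ) else if k = j₀ then -1 else 0)
          * (Wf i₀.val - Wf j₀.val)
        = (if k = i₀ then (1:ℝ) else if k = j₀ then -1 else 0)
          * (Δ * (Wf i₀.val - Wf j₀.val)) from by ring, hWijc]
    rw [if_fin_val k u, if_fin_val k v]
    have base1 := clamp_flow2 u.val v.val huv v.isLt k
    have base2 := clamp_flow2 i₀.val j₀.val hlt j₀.isLt k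
    rw [show (if k = i₀ then (1:ℝ) else if k = j₀ then -1 else 0)
        = (if k.val = i₀.val then (1:ℝ) else if k.val = j₀.val then -1 else 0) from by
      simp only [Fin.ext_iff]]
    simp only [hWf]
    split_ifs at base1 base2 ⊢ <;>
      first
        | (exfalso; omega)
        | linear_combination base1 - c * base2
  have e2 : effR Ld₂ u v = Wf u.val - Wf v.val :=
    effR_eq hL2T hMP₂ hker2 u v _ hW
  -- final computation
  have hcu : clv u.val v.val u.val = -((u.val : ℕ) : ℝ) := by
    simp only [clv]; rw [show min (max u.val u.val) v.val = u.val by omega]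
  have hcv : clv u.val v.val v.val = -((v.val : ℕ) : ℝ) := by
    simp only [clv]; rw [show min (max v.val u.val) v.val = v.val by omega]
  rw [e1, e2]
  simp only [hWf]
  rw [hcu, hcv, hc, hs]
  simp only [clv]
  field_simp
  ring

end Aux3
/-- For the path graph `P_n` with an added edge of weight `Δ ≥ 0` between vertices
`i₀ < j₀` (1-indexed as in the paper; here `a = i₀` and `b = j₀` denote the 1-indexed
labels of the endpoints), the RP-1 distance is
`Δ(b-a)[2n(1 + (b-a)(2b + 4a - 3)) - 3(b-a)(a+b-1)²] / (6(Δ(b-a) + 1))`. -/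
theorem rp1_path_graph (n : ℕ) (hn : 2 ≤ n)
    (i₀ j₀ : Fin n) (hlt : i₀.val < j₀.val) (Δ : ℝ) (hΔ : 0 ≤ Δ)
    (Ld₁ Ld₂ : Matrix (Fin n) (Fin n) ℝ)
    (hMP₁ : IsMoorePenrose (lap (pathAdj n)) Ld₁)
    (hMP₂ : IsMoorePenrose (lap (pathAdj n + edgePert i₀ j₀ Δ)) Ld₂) :
    ∑ i, ∑ j, |effR Ld₁ i j - effR Ld₂ i j|
      = |Δ| * (((j₀.val : ℝ) + 1) - ((i₀.val : ℝ) + 1))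
          * (2 * n * (1 + (((j₀.val : ℝ) + 1) - ((i₀.val : ℝ) + 1))
                * (2 * ((j₀.val : ℝ) + 1) + 4 * ((i₀.val : ℝ) + 1) - 3))
             - 3 * (((j₀.val : ℝ) + 1) - ((i₀.val : ℝ) + 1))
                * (((i₀.val : ℝ) + 1) + ((j₀.val : ℝ) + 1) - 1) ^ 2)
          / (6 * (Δ * (((j₀.val : ℝ) + 1) - ((i₀.val : ℝ) + 1)) + 1)) := by
  have hs1 : Ld₁ᵀ = Ld₁ := mp_symm (lap_transpose pathAdj_symm_entries) hMP₁
  have hs2 : Ld₂ᵀ = Ld₂ := mp_symm (lap_transpose (A2_symm_entries i₀ j₀ Δ)) hMP₂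
  have hdnn : (0:ℝ) ≤ (j₀.val:ℝ) - (i₀.val:ℝ) := by
    have : (i₀.val:ℝ) ≤ (j₀.val:ℝ) := by exact_mod_cast hlt.le
    linarith
  have hd0 : (0:ℝ) < 1 + Δ * ((j₀.val:ℝ) - (i₀.val:ℝ)) := by
    nlinarith [mul_nonneg hΔ hdnn]
  have summand : ∀ u v : Fin n, |effR Ld₁ u v - effR Ld₂ u v|
      = Δ * (((min (max v.val i₀.val) j₀.val : ℕ):ℝ)
          - ((min (max u.val i₀.val) j₀.val : ℕ):ℝ))^2
        / (1 + Δ * ((j₀.val:ℝ) - (i₀.val:ℝ))) := by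
    intro u v
    rcases Nat.lt_trichotomy u.val v.val with h | h | h
    · rw [key_pair i₀ j₀ hlt Δ hΔ Ld₁ Ld₂ hMP₁ hMP₂ u v h]
      exact abs_of_nonneg (div_nonneg (mul_nonneg hΔ (sq_nonneg _)) hd0.le)
    · have huvq : u = v := Fin.ext h
      subst huvq
      rw [effR_self, effR_self, sub_self, abs_zero, sub_self]
      ring
    · rw [effR_symm hs1 u v, effR_symm hs2 u v,
        key_pair i₀ j₀ hlt Δ hΔ Ld₁ Ld₂ hMP₁ hMP₂ v u h,
        abs_of_nonneg (div_nonneg (mul_nonneg hΔ (sq_nonneg _)) hd0.le)]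
      ring
  have main : ∑ i, ∑ j, |effR Ld₁ i j - effR Ld₂ i j|
      = (Δ / (1 + Δ * ((j₀.val:ℝ) - (i₀.val:ℝ))))
        * ∑ u : Fin n, ∑ v : Fin n,
          (((min (max v.val i₀.val) j₀.val : ℕ):ℝ)
            - ((min (max u.val i₀.val) j₀.val : ℕ):ℝ))^2 := by
    rw [Finset.mul_sum]
    refine Finset.sum_congr rfl fun u _ => ?_
    rw [Finset.mul_sum]
    refine Finset.sum_congr rfl fun v _ => ?_
    rw [summand u v]; ring
  rw [main]
  have SQ := sq_diff_sum (fun x : Fin n => ((min (max x.val i₀.val) j₀.val : ℕ):ℝ))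
  beta_reduce at SQ
  rw [SQ]
  have T1 : ∑ x : Fin n, ((min (max x.val i₀.val) j₀.val : ℕ):ℝ)
      = ∑ k ∈ Finset.range n, ((min (max k i₀.val) j₀.val : ℕ):ℝ) :=
    Fin.sum_univ_eq_sum_range (fun m => ((min (max m i₀.val) j₀.val : ℕ):ℝ)) n
  have T2 : ∑ x : Fin n, ((min (max x.val i₀.val) j₀.val : ℕ):ℝ)^2
      = ∑ k ∈ Finset.range n, ((min (max k i₀.val) j₀.val : ℕ):ℝ)^2 :=
    Fin.sum_univ_eq_sum_range (fun m => ((min (max m i₀.val) j₀.val : ℕ):ℝ)^2) n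
  rw [T1, T2, clamp_sum n i₀.val j₀.val hlt j₀.isLt, clamp_sq_sum n i₀.val j₀.val hlt j₀.isLt,
    abs_of_nonneg hΔ]
  have h2 : Δ * (((j₀.val:ℝ)+1) - ((i₀.val:ℝ)+1)) + 1 ≠ 0 := by
    rw [show Δ * (((j₀.val:ℝ)+1) - ((i₀.val:ℝ)+1)) + 1
        = 1 + Δ*((j₀.val:ℝ)-(i₀.val:ℝ)) from by ring]
    exact hd0.ne'
  field_simp
  ring
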